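/- arXiv:1709.02162 — 3 statements merged into one kernel-verified Lean document; each statement's English description precedes it below -/
import Mathlib

section
/- Let k, l ≥ 0 with k + l ≤ n + 1, and let a_0,...,a_{k-1}, b_0,...,b_{l-1} be real numbers. Suppose the coefficients p_0,...,p_n satisfy p_i = ((n-i)!/n!) a_i − Σ_{h=0}^{i-1} (-1)^{i-h} C(i,h) p_h for i = 0,...,k−1, and p_{n-j} = (−1)^j ((n-j)!/n!) b_j − Σ_{h=1}^{j} (−1)^h C(j,h) p_{n-j+h} for j = 0,...,l−1. Then the polynomial w_n(x) = Σ_{i=0}^n p_i B_i^n(x) satisfies w_n^{(i)}(0) = a_i for i = 0,...,k−1 and w_n^{(j)}(1) = b_j for j = 0,...,l−1. -/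
open Polynomial Finset

private lemma coeff_one_sub_X_pow (m k : ℕ) :
    ((1 - (X : ℝ[X])) ^ m).coeff k = (-1 : ℝ) ^ k * m.choose k := by
  have h : (1 - (X : ℝ[X])) ^ m
      = ∑ j ∈ Finset.range (m + 1), Polynomial.C ((-1 : ℝ) ^ j * m.choose j) * X ^ j := by
    rw [sub_eq_add_neg, add_comm, add_pow]
    refine Finset.sum_congr rfl fun j hj => ?_
    rw [one_pow, mul_one, neg_pow]
    rw [map_mul, ← Polynomial.C_eq_natCast]
    ring_nf
    simp [Polynomial.C_eq_natCast, mul_comm, mul_assoc, mul_left_comm]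
  rw [h, Polynomial.finset_sum_coeff]
  simp only [Polynomial.coeff_C_mul, Polynomial.coeff_X_pow, mul_ite, mul_one, mul_zero]
  rw [Finset.sum_ite_eq (Finset.range (m + 1)) k]
  split_ifs with hk
  · rfl
  · rw [Nat.choose_eq_zero_of_lt (by simpa using hk)]
    simp

private lemma bern_coeff (n q i : ℕ) :
    (bernsteinPolynomial ℝ n q).coeff i =
      if q ≤ i then (-1 : ℝ) ^ (i - q) * n.choose q * (n - q).choose (i - q) else 0 := by
  rw [bernsteinPolynomial]
  have h : ((n.choose q : ℝ[X]) * X ^ q * (1 - X) ^ (n - q))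
      = ((n.choose q : ℝ[X]) * (1 - X) ^ (n - q)) * X ^ q := by ring
  rw [h, Polynomial.coeff_mul_X_pow']
  split_ifs with hqi
  · rw [← Polynomial.C_eq_natCast, Polynomial.coeff_C_mul, coeff_one_sub_X_pow]
    ring
  · rfl

private lemma iter_eval0 (P : ℝ[X]) (i : ℕ) :
    (Polynomial.derivative^[i] P).eval 0 = (i.factorial : ℝ) * P.coeff i := by
  rw [← Polynomial.coeff_zero_eq_eval_zero, Polynomial.coeff_iterate_derivative]
  simp [Nat.descFactorial_self, nsmul_eq_mul]

private lemma natid {n q i : ℕ} (hqi : q ≤ i) (hin : i ≤ n) :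
    i.factorial * (n.choose q * (n - q).choose (i - q)) = n.descFactorial i * i.choose q := by
  rw [Nat.descFactorial_eq_factorial_mul_choose, mul_assoc, ← Nat.choose_mul (n := n) hqi]

private lemma keysum (n i : ℕ) (hi : i ≤ n) (p : ℕ → ℝ) :
    (Polynomial.derivative^[i]
        (∑ q ∈ Finset.range (n + 1), Polynomial.C (p q) * bernsteinPolynomial ℝ n q)).eval 0
      = (n.descFactorial i : ℝ) *
        ∑ q ∈ Finset.range (i + 1), (-1 : ℝ) ^ (i - q) * (i.choose q : ℝ) * p q := by
  rw [iter_eval0, Polynomial.finset_sum_coeff]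
  rw [← Finset.sum_subset (Finset.range_subset_range.mpr (by omega) :
        Finset.range (i + 1) ⊆ Finset.range (n + 1))
      (fun q _ hq => by
        rw [Polynomial.coeff_C_mul, bern_coeff, if_neg (by simp at hq; omega), mul_zero])]
  rw [Finset.mul_sum, Finset.mul_sum]
  refine Finset.sum_congr rfl fun q hq => ?_
  have hqi : q ≤ i := by simp at hq; omega
  rw [Polynomial.coeff_C_mul, bern_coeff, if_pos hqi]
  have hid : ((i.factorial * (n.choose q * (n - q).choose (i - q)) : ℕ) : ℝ)
      = ((n.descFactorial i * i.choose q : ℕ) : ℝ) := by rw [natid hqi hi]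
  push_cast at hid
  linear_combination ((-1 : ℝ) ^ (i - q) * p q) * hid

theorem bernstein_boundary_conditions (n k l : ℕ) (hkl : k + l ≤ n + 1)
    (a b : ℕ → ℝ) (p : ℕ → ℝ)
    (hp1 : ∀ i < k, p i = ((n - i).factorial : ℝ) / (n.factorial : ℝ) * a i -
        ∑ h ∈ Finset.range i, (-1 : ℝ) ^ (i - h) * (i.choose h : ℝ) * p h)
    (hp2 : ∀ j < l, p (n - j) = (-1 : ℝ) ^ j * ((n - j).factorial : ℝ) / (n.factorial : ℝ) * b j -
        ∑ h ∈ Finset.Icc 1 j, (-1 : ℝ) ^ h * (j.choose h : ℝ) * p (n - j + h)) :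
    (∀ i < k, (Polynomial.derivative^[i]
        (∑ q ∈ Finset.range (n + 1), Polynomial.C (p q) * bernsteinPolynomial ℝ n q)).eval 0
        = a i) ∧
    (∀ j < l, (Polynomial.derivative^[j]
        (∑ q ∈ Finset.range (n + 1), Polynomial.C (p q) * bernsteinPolynomial ℝ n q)).eval 1
        = b j) := by
  have hn0 : (n.factorial : ℝ) ≠ 0 := Nat.cast_ne_zero.mpr n.factorial_ne_zero
  constructor
  · intro i hik
    have hin : i ≤ n := by omega
    have hfac : ((n - i).factorial : ℝ) * (n.descFactorial i : ℝ) = (n.factorial : ℝ) := by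
      exact_mod_cast congrArg (Nat.cast : ℕ → ℝ) (Nat.factorial_mul_descFactorial hin)
    rw [keysum n i hin p, Finset.sum_range_succ, hp1 i hik]
    simp only [Nat.sub_self, pow_zero, Nat.choose_self, Nat.cast_one, one_mul, mul_one]
    field_simp
    linear_combination (a i) * hfac
  · intro j hjl
    have hjn : j ≤ n := by omega
    have hfac : ((n - j).factorial : ℝ) * (n.descFactorial j : ℝ) = (n.factorial : ℝ) := by
      exact_mod_cast congrArg (Nat.cast : ℕ → ℝ) (Nat.factorial_mul_descFactorial hjn)
    have hW : (∑ q ∈ Finset.range (n + 1), Polynomial.C (p q) * bernsteinPolynomial ℝ n q)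
        = (∑ r ∈ Finset.range (n + 1),
            Polynomial.C (p (n - r)) * bernsteinPolynomial ℝ n r).comp (1 - Polynomial.X) := by
      rw [← Finset.sum_range_reflect (fun q => Polynomial.C (p q) * bernsteinPolynomial ℝ n q)
        (n + 1)]
      rw [Polynomial.sum_comp]
      simp only [Nat.add_sub_cancel]
      refine Finset.sum_congr rfl fun r hr => ?_
      have hrn : r ≤ n := by simp at hr; omega
      rw [Polynomial.mul_comp, Polynomial.C_comp, bernsteinPolynomial.flip ℝ n r hrn]
    rw [hW, Polynomial.iterate_derivative_comp_one_sub_X, Polynomial.eval_mul,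
      Polynomial.eval_pow, Polynomial.eval_neg, Polynomial.eval_one, Polynomial.eval_comp,
      Polynomial.eval_sub, Polynomial.eval_one, Polynomial.eval_X, sub_self,
      keysum n j hjn (fun r => p (n - r)), Finset.sum_range_succ, hp2 j hjl]
    have hT : ∑ r ∈ Finset.range j, (-1 : ℝ) ^ (j - r) * (j.choose r : ℝ) * p (n - r)
        = ∑ h ∈ Finset.Icc 1 j, (-1 : ℝ) ^ h * (j.choose h : ℝ) * p (n - j + h) := by
      refine Finset.sum_nbij' (fun r => j - r) (fun h => j - h)
        (fun r hr => by simp at hr ⊢; omega) (fun h hh => by simp at hh ⊢; omega)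
        (fun r hr => by simp at hr ⊢; omega) (fun h hh => by simp at hh ⊢; omega)
        (fun r hr => ?_)
      have hrj : r < j := by simpa using hr
      show (-1 : ℝ) ^ (j - r) * (j.choose r : ℝ) * p (n - r)
        = (-1 : ℝ) ^ (j - r) * (j.choose (j - r) : ℝ) * p (n - j + (j - r))
      rw [Nat.choose_symm (by omega : r ≤ j)]
      have h2 : n - j + (j - r) = n - r := by omega
      rw [h2]
    rw [hT]
    simp only [Nat.sub_self, pow_zero, Nat.choose_self, Nat.cast_one, one_mul, mul_one]
    have hsq : ((-1 : ℝ)) ^ j * (-1 : ℝ) ^ j = 1 := by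
      rw [← pow_add, ← two_mul, pow_mul, neg_one_sq, one_pow]
    field_simp
    linear_combination ((n.descFactorial j : ℝ) * ((n - j).factorial : ℝ) * b j) * hsq
      + (b j) * hfac
end

section
/- Let D_i^n = Σ_{j=0}^n c_{i,j} B_j^n be the Bernstein representation of the dual Bernstein polynomials. Then c_{0,j} = (−1)^j (n+1)(n+1−j)_{j+1}/(j+1)! for j = 0,...,n, where (a)_m denotes the rising/Pochhammer product a(a+1)···(a+m−1). -/
open MeasureTheory intervalIntegral Polynomial Finset



lemma beta_nat (a b : ℕ) : ∫ x in (0:ℝ)..1, x ^ a * (1 - x) ^ b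
    = (a.factorial * b.factorial : ℝ) / ((a + b + 1).factorial) := by
  induction b generalizing a with
  | zero =>
    simp only [pow_zero, mul_one, integral_pow, Nat.factorial_zero, Nat.cast_one,
      Nat.add_zero]
    rw [Nat.factorial_succ, one_pow, zero_pow (by positivity), sub_zero]
    push_cast
    rw [eq_div_iff (by positivity)]
    field_simp
  | succ b ih =>
    have ha : ((a:ℝ)+1) ≠ 0 := by positivity
    have h := intervalIntegral.integral_mul_deriv_eq_deriv_mul
      (u := fun x : ℝ => (1 - x) ^ (b + 1))
      (u' := fun x : ℝ => -(((b:ℝ)+1) * (1 - x) ^ b))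
      (v := fun x : ℝ => x ^ (a + 1) / ((a:ℝ)+1))
      (v' := fun x : ℝ => x ^ a) (a := (0:ℝ)) (b := (1:ℝ))
      (fun x _ => by
        have h1 : HasDerivAt (fun x : ℝ => 1 - x) (-1) x := by
          simpa using (hasDerivAt_id x).const_sub 1
        have := h1.pow (b + 1)
        rw [show (fun x : ℝ => (1 - x) ^ (b + 1)) = (fun x : ℝ => 1 - x) ^ (b + 1) from rfl]
        simpa [mul_comm, mul_assoc, mul_left_comm] using this)
      (fun x _ => by
        have := (hasDerivAt_pow (a + 1) x).div_const ((a:ℝ)+1)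
        simpa [Nat.add_sub_cancel, mul_comm, mul_div_assoc, div_self ha] using this)
      (Continuous.intervalIntegrable (by continuity) 0 1)
      (Continuous.intervalIntegrable (by continuity) 0 1)
    beta_reduce at h
    have e1 : ∫ x in (0:ℝ)..1, -(((b:ℝ)+1) * (1 - x) ^ b) * (x ^ (a+1) / ((a:ℝ)+1))
        = -((((b:ℝ)+1)/((a:ℝ)+1)) * ∫ x in (0:ℝ)..1, x ^ (a+1) * (1-x) ^ b) := by
      rw [← intervalIntegral.integral_const_mul, ← intervalIntegral.integral_neg]
      exact intervalIntegral.integral_congr (fun x _ => by show _ = _; ring)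
    rw [e1] at h
    rw [intervalIntegral.integral_congr
        (g := fun x : ℝ => (1 - x) ^ (b + 1) * x ^ a) (fun x _ => by show _ = _; ring)]
    rw [h, ih (a+1)]
    norm_num
    rw [show a + 1 + b + 1 = a + (b + 1) + 1 by ring]
    rw [Nat.factorial_succ (a), Nat.factorial_succ (b)]
    push_cast
    field_simp



-- product formula
lemma prod_asc (n j : ℕ) (hj : j ≤ n) :
    ∏ h ∈ Finset.range (j + 1), (n + 1 - j + h) = (j+1).factorial * (n+1).choose (j+1) := by
  have h1 : ∀ a k : ℕ, ∏ h ∈ Finset.range k, (a + h) = a.ascFactorial k := by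
    intro a k
    induction k with
    | zero => simp
    | succ k ih => rw [Finset.prod_range_succ, ih, Nat.ascFactorial_succ, mul_comm]
  rw [h1, show n + 1 - j = (n - j) + 1 by omega, Nat.ascFactorial_eq_factorial_mul_choose,
    show n - j + (j+1) = n + 1 by omega]

-- key nat identity
lemma natkey (n q m : ℕ) (hq : q ≤ n) :
    (n+1).choose (q+1) * ((n-q).factorial * (q+m+1).factorial)
      = (n+1).factorial * m.factorial * ((q+m+1).choose (q+1)) := by
  apply Nat.eq_of_mul_eq_mul_left (Nat.factorial_pos (q+1))
  have h1 := Nat.choose_mul_factorial_mul_factorial (show q+1 ≤ n+1 by omega)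
  rw [show n+1-(q+1) = n-q from by omega] at h1
  have h2 := Nat.choose_mul_factorial_mul_factorial (show q+1 ≤ q+m+1 by omega)
  rw [show q+m+1-(q+1) = m from by omega] at h2
  calc (q+1).factorial * ((n+1).choose (q+1) * ((n-q).factorial * (q+m+1).factorial))
      = ((n+1).choose (q+1) * (q+1).factorial * (n-q).factorial) * (q+m+1).factorial := by ring
    _ = (n+1).factorial * (q+m+1).factorial := by rw [h1]
    _ = (n+1).factorial * ((q+m+1).choose (q+1) * (q+1).factorial * m.factorial) := by rw [h2]
    _ = (q+1).factorial * ((n+1).factorial * m.factorial * (q+m+1).choose (q+1)) := by ring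

-- alternating sum A1
lemma alt1 (n : ℕ) :
    ∑ q ∈ Finset.range (n + 1), (-1 : ℝ) ^ q * ((n+1).choose (q+1)) = 1 := by
  have h := @Int.alternating_sum_range_choose (n+1)
  rw [if_neg (Nat.succ_ne_zero n)] at h
  have h2 : ((∑ i ∈ Finset.range (n + 2), (-1 : ℤ) ^ i * ((n+1).choose i) : ℤ) : ℝ) = 0 := by
    rw [h]; norm_num
  push_cast at h2
  rw [Finset.sum_range_succ'] at h2
  simp only [pow_succ, Nat.choose_zero_right, pow_zero, Nat.cast_one, one_mul] at h2
  have : ∑ q ∈ Finset.range (n + 1), (-1 : ℝ) ^ q * ((n+1).choose (q+1))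
      = -∑ i ∈ Finset.range (n + 1), (-1:ℝ) ^ i * (-1) * ((n+1).choose (i+1)) := by
    rw [← Finset.sum_neg_distrib]
    exact Finset.sum_congr rfl (fun i _ => by ring)
  rw [this]
  linarith



lemma alt2 (n m : ℕ) (hm1 : 1 ≤ m) (hmn : m ≤ n) :
    ∑ q ∈ Finset.range (n+1), (-1:ℝ)^q * (n.choose q) * ((q+m).choose (q+1)) = 0 := by
  have hb : (X:ℝ[X])^n = ∑ q ∈ Finset.range (n+1), (X+1)^q * (-1)^(n-q) * (n.choose q : ℝ[X]) := by
    have h := add_pow ((X:ℝ[X])+1) (-1) n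
    rw [show (X:ℝ[X]) + 1 + (-1) = X by ring] at h
    exact h
  have hterm : ∀ q, ((X:ℝ[X])+1)^q * (-1)^(n-q) * (n.choose q : ℝ[X]) * ((X:ℝ[X])+1)^m
      = Polynomial.C ((-1:ℝ)^(n-q) * (n.choose q)) * ((X:ℝ[X])+1)^(q+m) := by
    intro q
    rw [pow_add]
    simp only [map_mul, map_pow, Polynomial.C_neg, Polynomial.C_1, Polynomial.C_eq_natCast]
    ring
  have hcoeff := congrArg (fun p => Polynomial.coeff (p * ((X:ℝ[X])+1)^m) (m-1)) hb
  simp only [Finset.sum_mul] at hcoeff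
  rw [Polynomial.finset_sum_coeff] at hcoeff
  have hL : Polynomial.coeff ((X:ℝ[X])^n * ((X:ℝ[X])+1)^m) (m-1) = 0 := by
    rw [mul_comm, Polynomial.coeff_mul_X_pow']
    rw [if_neg (by omega)]
  have key : ∑ q ∈ Finset.range (n+1), (-1:ℝ)^(n-q) * (n.choose q) * ((q+m).choose (m-1)) = 0 := by
    rw [← hL]
    rw [hcoeff]
    apply Finset.sum_congr rfl
    intro q _
    rw [hterm q, Polynomial.coeff_C_mul, Polynomial.coeff_X_add_one_pow]
  calc ∑ q ∈ Finset.range (n+1), (-1:ℝ)^q * (n.choose q) * ((q+m).choose (q+1))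
      = (-1:ℝ)^n * ∑ q ∈ Finset.range (n+1), (-1:ℝ)^(n-q) * (n.choose q) * ((q+m).choose (m-1)) := by
        rw [Finset.mul_sum]
        apply Finset.sum_congr rfl
        intro q hq
        have hqn : q ≤ n := Nat.lt_succ_iff.mp (Finset.mem_range.mp hq)
        have h1 : (-1:ℝ)^n * (-1:ℝ)^(n-q) = (-1:ℝ)^q := by
          rw [← pow_add, show n + (n-q) = 2*(n-q) + q by omega, pow_add, pow_mul]
          norm_num
        have h2 : (q+m).choose (m-1) = (q+m).choose (q+1) := by
          rw [← Nat.choose_symm (show m-1 ≤ q+m by omega), show q+m-(m-1) = q+1 by omega]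
        rw [h2, ← h1]
        ring
    _ = 0 := by rw [key, mul_zero]



lemma Emoment (n m : ℕ) (hm : m ≤ n) :
    ∑ q ∈ Finset.range (n+1), ((-1:ℝ)^q * ((n:ℝ)+1) * ((n+1).choose (q+1))) *
      ((n.choose q : ℝ) * ((q+m).factorial * (n-q).factorial) / ((n+m+1).factorial))
    = if m = 0 then 1 else 0 := by
  rcases Nat.eq_zero_or_pos m with hm0 | hm1
  · subst hm0
    rw [if_pos rfl]
    rw [show ∑ q ∈ Finset.range (n+1), ((-1:ℝ)^q * ((n:ℝ)+1) * ((n+1).choose (q+1))) *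
      ((n.choose q : ℝ) * ((q+0).factorial * (n-q).factorial) / ((n+0+1).factorial))
      = ∑ q ∈ Finset.range (n + 1), (-1 : ℝ) ^ q * ((n+1).choose (q+1)) from ?_, alt1 n]
    apply Finset.sum_congr rfl
    intro q hq
    have hqn : q ≤ n := Nat.lt_succ_iff.mp (Finset.mem_range.mp hq)
    have hc : ((n.choose q : ℕ) * ((q+0).factorial * (n-q).factorial) : ℕ) = n.factorial := by
      rw [Nat.add_zero, ← mul_assoc]
      exact Nat.choose_mul_factorial_mul_factorial hqn
    have hc' : (n.choose q : ℝ) * (((q+0).factorial : ℝ) * ((n-q).factorial : ℝ))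
        = (n.factorial : ℝ) := by exact_mod_cast congrArg (Nat.cast (R := ℝ)) hc
    have hfac : ((n+0+1).factorial : ℝ) = ((n:ℝ)+1) * (n.factorial : ℝ) := by
      rw [Nat.add_zero, Nat.factorial_succ]; push_cast; ring
    simp only [Nat.add_zero] at hc'
    rw [hfac]
    have hne1 : ((n:ℝ)+1) ≠ 0 := by positivity
    have hne2 : (n.factorial : ℝ) ≠ 0 := by positivity
    field_simp
    linear_combination (((n+1).choose (q+1) : ℕ) : ℝ) * hc'
  · rw [if_neg (by omega)]
    obtain ⟨m', rfl⟩ : ∃ m', m = m' + 1 := ⟨m - 1, by omega⟩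
    have K := (((n:ℝ)+1) * ((n+1).factorial : ℝ) * ((m').factorial : ℝ) /
      (((n+(m'+1)+1).factorial : ℝ)))
    calc ∑ q ∈ Finset.range (n+1), ((-1:ℝ)^q * ((n:ℝ)+1) * ((n+1).choose (q+1))) *
          ((n.choose q : ℝ) * ((q+(m'+1)).factorial * (n-q).factorial) / ((n+(m'+1)+1).factorial))
        = ∑ q ∈ Finset.range (n+1),
            (((n:ℝ)+1) * ((n+1).factorial : ℝ) * ((m'.factorial : ℝ)) / ((n+(m'+1)+1).factorial : ℝ)) *
              ((-1:ℝ)^q * (n.choose q) * ((q+(m'+1)).choose (q+1))) := by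
          apply Finset.sum_congr rfl
          intro q hq
          have hqn : q ≤ n := Nat.lt_succ_iff.mp (Finset.mem_range.mp hq)
          have hkey := natkey n q m' hqn
          have hkey' : ((n+1).choose (q+1) : ℝ) * (((n-q).factorial : ℝ) * ((q+m'+1).factorial : ℝ))
              = ((n+1).factorial : ℝ) * (m'.factorial : ℝ) * ((q+m'+1).choose (q+1) : ℝ) := by
            exact_mod_cast congrArg (Nat.cast (R := ℝ)) hkey
          have hne : ((n+(m'+1)+1).factorial : ℝ) ≠ 0 := by positivity
          rw [show q+(m'+1) = q+m'+1 by ring]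
          field_simp
          linear_combination (n.choose q : ℝ) * hkey'
      _ = 0 := by
          rw [← Finset.mul_sum, alt2 n (m'+1) (by omega) (by omega), mul_zero]



lemma bern_eval (n q : ℕ) (x : ℝ) :
    (bernsteinPolynomial ℝ n q).eval x = (n.choose q : ℝ) * (x ^ q * (1 - x) ^ (n - q)) := by
  simp [bernsteinPolynomial]; ring

lemma bern_moment (n q m : ℕ) (hq : q ≤ n) :
    ∫ x in (0:ℝ)..1, (bernsteinPolynomial ℝ n q).eval x * x ^ m
      = (n.choose q : ℝ) * (((q+m).factorial : ℝ) * ((n-q).factorial : ℝ)) / ((n+m+1).factorial : ℝ) := by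
  rw [intervalIntegral.integral_congr
      (g := fun x : ℝ => (n.choose q : ℝ) * (x ^ (q + m) * (1 - x) ^ (n - q)))
      (fun x _ => by show _ = _; rw [bern_eval]; simp only; rw [pow_add]; ring)]
  rw [intervalIntegral.integral_const_mul, beta_nat, show q + m + (n - q) + 1 = n + m + 1 by omega]
  ring



lemma coeff_unique (n : ℕ) (g : ℕ → ℝ)
    (h : ∑ q ∈ Finset.range (n+1), Polynomial.C (g q) * bernsteinPolynomial ℝ n q = 0) :
    ∀ k ≤ n, g k = 0 := by
  intro k
  induction k using Nat.strong_induction_on with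
  | _ k ih =>
    intro hk
    have h0 := congrArg (fun p => (Polynomial.derivative^[k] p).eval 0) h
    simp only [Polynomial.iterate_derivative_sum, Polynomial.iterate_derivative_C_mul,
      Polynomial.eval_finset_sum, Polynomial.eval_mul, Polynomial.eval_C, map_zero,
      Polynomial.iterate_derivative_zero, Polynomial.eval_zero] at h0
    rw [Finset.sum_eq_single k (fun q hq hne => by
        rcases lt_or_gt_of_ne hne with hlt | hgt
        · rw [ih q hlt (by omega : q ≤ n), zero_mul]
        · rw [bernsteinPolynomial.iterate_derivative_at_0_eq_zero_of_lt ℝ n hgt, mul_zero])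
      (fun hnk => absurd (Finset.mem_range.mpr (by omega)) hnk)] at h0
    exact (mul_eq_zero.mp h0).resolve_right
      (bernsteinPolynomial.iterate_derivative_at_0_ne_zero ℝ n k hk)



-- the candidate dual coefficients
noncomputable def dcoef (n q : ℕ) : ℝ := (-1:ℝ)^q * ((n:ℝ)+1) * ((n+1).choose (q+1))

lemma bern_cont (n q : ℕ) : Continuous fun x : ℝ => (bernsteinPolynomial ℝ n q).eval x :=
  (bernsteinPolynomial ℝ n q).continuous

lemma sum_cont (n : ℕ) (g : ℕ → ℝ) :
    Continuous fun x : ℝ => ∑ q ∈ Finset.range (n+1), g q * (bernsteinPolynomial ℝ n q).eval x :=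
  continuous_finset_sum _ fun q _ => continuous_const.mul (bern_cont n q)

lemma EmomentInt (n m : ℕ) (hm : m ≤ n) :
    ∫ x in (0:ℝ)..1,
      (∑ q ∈ Finset.range (n+1), dcoef n q * (bernsteinPolynomial ℝ n q).eval x) * x ^ m
    = if m = 0 then 1 else 0 := by
  rw [intervalIntegral.integral_congr
      (g := fun x : ℝ => ∑ q ∈ Finset.range (n+1),
        dcoef n q * ((bernsteinPolynomial ℝ n q).eval x * x ^ m))
      (fun x _ => by
        show _ = _
        rw [Finset.sum_mul]
        exact Finset.sum_congr rfl fun q _ => by ring)]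
  rw [intervalIntegral.integral_finset_sum
    (f := fun q x => dcoef n q * ((bernsteinPolynomial ℝ n q).eval x * x ^ m)) (fun q _ =>
    (continuous_const.mul ((bern_cont n q).mul (continuous_pow m))).intervalIntegrable 0 1)]
  simp_rw [intervalIntegral.integral_const_mul]
  rw [← Emoment n m hm]
  apply Finset.sum_congr rfl
  intro q hq
  rw [bern_moment n q m (Nat.lt_succ_iff.mp (Finset.mem_range.mp hq))]
  rfl

lemma bern_deg (n j : ℕ) (hj : j ≤ n) : (bernsteinPolynomial ℝ n j).natDegree < n + 1 := by
  apply Nat.lt_succ_of_le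
  unfold bernsteinPolynomial
  calc (Polynomial.C (n.choose j : ℝ) * X ^ j * (1 - X) ^ (n - j)).natDegree
      ≤ (Polynomial.C (n.choose j : ℝ) * X ^ j).natDegree + ((1 - X : ℝ[X]) ^ (n - j)).natDegree :=
        Polynomial.natDegree_mul_le
    _ ≤ j + (n - j) := by
        gcongr
        · exact (Polynomial.natDegree_C_mul_le _ _).trans (by simp)
        · exact Polynomial.natDegree_pow_le.trans (by
            have : (1 - X : ℝ[X]).natDegree ≤ 1 := by
              refine (Polynomial.natDegree_sub_le _ _).trans ?_
              simp
            calc (n-j) * (1 - X : ℝ[X]).natDegree ≤ (n-j) * 1 := by gcongr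
              _ = n - j := by ring)
    _ = n := by omega

lemma EBj (n j : ℕ) (hj : j ≤ n) :
    ∫ x in (0:ℝ)..1,
      (∑ q ∈ Finset.range (n+1), dcoef n q * (bernsteinPolynomial ℝ n q).eval x) *
        (bernsteinPolynomial ℝ n j).eval x
    = if j = 0 then 1 else 0 := by
  have heval : ∀ x : ℝ, (bernsteinPolynomial ℝ n j).eval x
      = ∑ m ∈ Finset.range (n+1), (bernsteinPolynomial ℝ n j).coeff m * x ^ m :=
    fun x => Polynomial.eval_eq_sum_range' (bern_deg n j hj) x
  rw [intervalIntegral.integral_congr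
      (g := fun x : ℝ => ∑ m ∈ Finset.range (n+1), (bernsteinPolynomial ℝ n j).coeff m *
        ((∑ q ∈ Finset.range (n+1), dcoef n q * (bernsteinPolynomial ℝ n q).eval x) * x ^ m))
      (fun x _ => by
        show _ = _
        rw [heval x, Finset.mul_sum]
        exact Finset.sum_congr rfl fun m _ => by ring)]
  rw [intervalIntegral.integral_finset_sum
    (f := fun m x => (bernsteinPolynomial ℝ n j).coeff m *
      ((∑ q ∈ Finset.range (n+1), dcoef n q * (bernsteinPolynomial ℝ n q).eval x) * x ^ m))
    (fun m _ =>
    (continuous_const.mul ((sum_cont n (dcoef n)).mul (continuous_pow m))).intervalIntegrable 0 1)]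
  simp_rw [intervalIntegral.integral_const_mul]
  have : ∀ m ∈ Finset.range (n+1), (bernsteinPolynomial ℝ n j).coeff m *
      (∫ x in (0:ℝ)..1,
        (∑ q ∈ Finset.range (n+1), dcoef n q * (bernsteinPolynomial ℝ n q).eval x) * x ^ m)
      = if m = 0 then (bernsteinPolynomial ℝ n j).coeff m else 0 := by
    intro m hm
    rw [EmomentInt n m (Nat.lt_succ_iff.mp (Finset.mem_range.mp hm))]
    split <;> simp
  rw [Finset.sum_congr rfl this, Finset.sum_ite_eq' (Finset.range (n+1)) 0,
    if_pos (Finset.mem_range.mpr (Nat.succ_pos n)),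
    Polynomial.coeff_zero_eq_eval_zero, bernsteinPolynomial.eval_at_0]




theorem dual_bernstein_first_row (n : ℕ) (c : ℕ → ℕ → ℝ)
    (hdual : ∀ i ≤ n, ∀ j ≤ n,
      ∫ x in (0 : ℝ)..1,
          (∑ q ∈ Finset.range (n + 1), c i q * (bernsteinPolynomial ℝ n q).eval x) *
            (bernsteinPolynomial ℝ n j).eval x = if i = j then 1 else 0) :
    ∀ j ≤ n, c 0 j = (-1 : ℝ) ^ j * (n + 1 : ℝ) *
        (∏ h ∈ Finset.range (j + 1), ((n + 1 - j + h : ℕ) : ℝ)) / ((j + 1).factorial : ℝ) := by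
  have hzero : ∀ m ≤ n, ∫ x in (0:ℝ)..1,
      (∑ q ∈ Finset.range (n+1), (c 0 q - dcoef n q) * (bernsteinPolynomial ℝ n q).eval x) *
        (bernsteinPolynomial ℝ n m).eval x = 0 := by
    intro m hm
    have h1 := hdual 0 (Nat.zero_le n) m hm
    have h2 := EBj n m hm
    rw [intervalIntegral.integral_congr
        (g := fun x : ℝ =>
          (∑ q ∈ Finset.range (n+1), c 0 q * (bernsteinPolynomial ℝ n q).eval x) *
            (bernsteinPolynomial ℝ n m).eval x -
          (∑ q ∈ Finset.range (n+1), dcoef n q * (bernsteinPolynomial ℝ n q).eval x) *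
            (bernsteinPolynomial ℝ n m).eval x)
        (fun x _ => by
          simp only []
          rw [← sub_mul, ← Finset.sum_sub_distrib]
          exact congrArg (· * _) (Finset.sum_congr rfl fun q _ => by ring))]
    rw [intervalIntegral.integral_sub
        (f := fun x => (∑ q ∈ Finset.range (n+1), c 0 q * (bernsteinPolynomial ℝ n q).eval x) *
          (bernsteinPolynomial ℝ n m).eval x)
        (g := fun x => (∑ q ∈ Finset.range (n+1), dcoef n q * (bernsteinPolynomial ℝ n q).eval x) *
          (bernsteinPolynomial ℝ n m).eval x)
        (((sum_cont n (c 0)).mul (bern_cont n m)).intervalIntegrable 0 1)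
        (((sum_cont n (dcoef n)).mul (bern_cont n m)).intervalIntegrable 0 1), h1, h2]
    by_cases hm0 : m = 0 <;> simp [hm0, eq_comm]
  set G : ℝ → ℝ :=
    fun x => ∑ q ∈ Finset.range (n+1), (c 0 q - dcoef n q) * (bernsteinPolynomial ℝ n q).eval x
    with hGdef
  have hGcont : Continuous G := sum_cont n _
  have hG2 : ∫ x in (0:ℝ)..1, (G x)^2 = 0 := by
    rw [intervalIntegral.integral_congr
        (g := fun x : ℝ => ∑ m ∈ Finset.range (n+1),
          (c 0 m - dcoef n m) * (G x * (bernsteinPolynomial ℝ n m).eval x))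
        (fun x _ => by
          show (G x)^2 = _
          rw [pow_two]
          conv_lhs => rw [hGdef]
          simp only
          rw [Finset.sum_mul]
          exact Finset.sum_congr rfl fun m _ => by ring)]
    rw [intervalIntegral.integral_finset_sum
      (f := fun m x => (c 0 m - dcoef n m) * (G x * (bernsteinPolynomial ℝ n m).eval x))
      (fun m _ =>
      (continuous_const.mul (hGcont.mul (bern_cont n m))).intervalIntegrable 0 1)]
    apply Finset.sum_eq_zero
    intro m hm
    rw [intervalIntegral.integral_const_mul, hzero m (Nat.lt_succ_iff.mp (Finset.mem_range.mp hm)),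
      mul_zero]
  have hae := (intervalIntegral.integral_eq_zero_iff_of_le_of_nonneg_ae (by norm_num)
    (Filter.Eventually.of_forall fun x => sq_nonneg (G x))
    ((hGcont.pow 2).intervalIntegrable 0 1)).mp hG2
  set P : ℝ[X] :=
    ∑ q ∈ Finset.range (n+1), Polynomial.C (c 0 q - dcoef n q) * bernsteinPolynomial ℝ n q
    with hPdef
  have hPeval : ∀ x : ℝ, P.eval x = G x := by
    intro x
    rw [hPdef, hGdef, Polynomial.eval_finset_sum]
    exact Finset.sum_congr rfl fun q _ => by rw [Polynomial.eval_mul, Polynomial.eval_C]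
  have hP : P = 0 := by
    apply Polynomial.eq_zero_of_infinite_isRoot
    by_contra hfin
    rw [Set.not_infinite] at hfin
    have hs0 : volume {x : ℝ | P.IsRoot x} = 0 := hfin.countable.measure_zero _
    have hm1 : MeasurableSet {x : ℝ | P.IsRoot x} :=
      (P.continuous.measurable) (measurableSet_singleton (0:ℝ))
    have haeP : ∀ᵐ x ∂(volume.restrict (Set.Ioc (0:ℝ) 1)), P.IsRoot x := by
      filter_upwards [hae] with x hx
      show P.eval x = 0
      rw [hPeval]
      have : (G x)^2 = 0 := hx
      exact pow_eq_zero_iff two_ne_zero |>.mp this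
    rw [MeasureTheory.ae_iff] at haeP
    rw [show {a : ℝ | ¬ P.IsRoot a} = {x : ℝ | P.IsRoot x}ᶜ from rfl] at haeP
    rw [Measure.restrict_apply hm1.compl] at haeP
    have cover : Set.Ioc (0:ℝ) 1 ⊆
        ({x : ℝ | P.IsRoot x}ᶜ ∩ Set.Ioc (0:ℝ) 1) ∪ {x : ℝ | P.IsRoot x} := by
      intro x hx
      by_cases hr : P.IsRoot x
      · exact Set.mem_union_right _ hr
      · exact Set.mem_union_left _ ⟨hr, hx⟩
    have hle := (measure_mono (μ := volume) cover).trans (measure_union_le _ _)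
    rw [haeP, hs0, Real.volume_Ioc] at hle
    norm_num at hle
  have hcoef := coeff_unique n _ hP
  intro j hj
  have hcd : c 0 j = dcoef n j := by
    have := hcoef j hj
    linarith
  rw [hcd]
  unfold dcoef
  rw [show (∏ h ∈ Finset.range (j+1), ((n+1-j+h : ℕ):ℝ))
      = (((j+1).factorial * (n+1).choose (j+1) : ℕ) : ℝ) by
    rw [← Nat.cast_prod, prod_asc n j hj]]
  push_cast
  have hne : ((j+1).factorial : ℝ) ≠ 0 := by positivity
  field_simp
end

section
/- For any reals d_0,...,d_{n−m} and prescribed outer coefficients p_0,...,p_{k−1}, p_{n−l+1},...,p_n (with m = k + l ≤ n), the banded Toeplitz linear system Σ_{h=max(0,k−i)}^{min(m, n−l−i)} (−1)^{m−h} C(m,h) p_{i+h} = d_i − (Σ_{h=0}^{k−i−1} + Σ_{h=n−l−i+1}^{m}) (−1)^{m−h} C(m,h) p_{i+h}, for i = 0,...,n−m, in the unknowns p_k,...,p_{n−l}, has coefficient matrix g_{i,j} = (−1)^{l+i−j} C(m, j+k−i) (i,j = 0,...,n−m), and this matrix is invertible. -/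
open Finset Function
open scoped fwdDiff

private lemma fwdDiff_iter_eq (f : ℕ → ℝ) (N y : ℕ) :
    (fwdDiff 1)^[N] f y = ∑ h ∈ Finset.range (N + 1),
      (-1 : ℝ) ^ (N - h) * (N.choose h : ℝ) * f (y + h) := by
  rw [fwdDiff_iter_eq_sum_shift]
  refine Finset.sum_congr rfl fun h _ => ?_
  have hs : h • (1 : ℕ) = h := by simp
  rw [hs, zsmul_eq_mul]
  push_cast
  ring

private lemma newton_eq (f : ℕ → ℝ) (t : ℕ) :
    f t = ∑ i ∈ Finset.range (t + 1), (t.choose i : ℝ) * (fwdDiff 1)^[i] f 0 := by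
  have h := shift_eq_sum_fwdDiff_iter (1 : ℕ) f t 0
  simpa [smul_eq_mul, nsmul_eq_mul] using h

private lemma sum_rewrite (n m k l : ℕ) (hm : m = k + l) (hn : m ≤ n)
    (i : ℕ) (hi : i ≤ n - m) (f : ℕ → ℝ) :
    (∑ j ∈ Finset.range (n - m + 1),
      ((-1 : ℝ) ^ (l + i + j) * (if i ≤ j + k then (m.choose (j + k - i) : ℝ) else 0)) * f (j + k))
    = ∑ h ∈ Finset.Icc (k - i) (min m (n - l - i)),
        (-1 : ℝ) ^ (m - h) * (m.choose h : ℝ) * f (i + h) := by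
  classical
  refine Eq.trans (Finset.sum_filter_of_ne
      (p := fun j => i ≤ j + k ∧ j + k - i ≤ m) (fun j hj hne => ?_)).symm ?_
  · by_contra hP
    apply hne
    rcases Classical.em (i ≤ j + k) with hik | hik
    · have hlt : m < j + k - i := by omega
      rw [if_pos hik, Nat.choose_eq_zero_of_lt hlt]
      simp
    · rw [if_neg hik]
      simp
  · refine Finset.sum_nbij' (fun j => j + k - i) (fun h => i + h - k) ?_ ?_ ?_ ?_ ?_
    · intro j hjmem
      simp only [Finset.mem_filter, Finset.mem_range] at hjmem
      simp only [Finset.mem_Icc, le_min_iff]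
      omega
    · intro h hmem
      simp only [Finset.mem_Icc, le_min_iff] at hmem
      simp only [Finset.mem_filter, Finset.mem_range]
      omega
    · intro j hjmem
      simp only [Finset.mem_filter, Finset.mem_range] at hjmem
      show i + (j + k - i) - k = j
      omega
    · intro h hmem
      simp only [Finset.mem_Icc, le_min_iff] at hmem
      show i + h - k + k - i = h
      omega
    · intro j hjmem
      simp only [Finset.mem_filter, Finset.mem_range] at hjmem
      obtain ⟨hj1, hj2, hj3⟩ := hjmem
      rw [if_pos hj2]
      have e1 : i + (j + k - i) = j + k := by omega
      have e2 : m - (j + k - i) = l + i - j := by omega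
      have e3 : l + i + j = (l + i - j) + 2 * j := by omega
      rw [e1, e2, e3, pow_add, pow_mul, neg_one_sq, one_pow, mul_one]

private lemma ker_zero (n m k l : ℕ) (hm : m = k + l) (hn : m ≤ n)
    (f : ℕ → ℝ)
    (hside : ∀ t, (t < k ∨ n - l < t) → f t = 0)
    (hker : ∀ i, i ≤ n - m → (fwdDiff 1)^[m] f i = 0) :
    ∀ t, t ≤ n → f t = 0 := by
  rcases Nat.eq_zero_or_pos m with hm0 | hmpos
  · intro t ht
    have := hker t (by omega)
    simpa [hm0] using this
  -- the iterated differences at 0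
  set a : ℕ → ℝ := fun i => (fwdDiff 1)^[i] f 0 with ha_def
  have ha : ∀ i, m ≤ i → i ≤ n → a i = 0 := by
    intro i hmi hin
    have hsplit : (fwdDiff 1)^[i] f = (fwdDiff 1)^[i - m] ((fwdDiff 1)^[m] f) := by
      rw [← Function.iterate_add_apply]
      congr 1
      omega
    have : a i = (fwdDiff 1)^[i - m] ((fwdDiff 1)^[m] f) 0 := congrFun hsplit 0
    rw [this, fwdDiff_iter_eq]
    refine Finset.sum_eq_zero fun s hs => ?_
    simp only [Finset.mem_range] at hs
    rw [zero_add, hker s (by omega), mul_zero]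
  -- Newton expansion valid on [0, n] with common index range
  have hval : ∀ t, t ≤ n → f t = ∑ i ∈ Finset.range (n + 1), (t.choose i : ℝ) * a i := by
    intro t ht
    rw [newton_eq f t]
    simp only [ha_def]
    refine Finset.sum_subset (by intro x hx; simp only [Finset.mem_range] at *; omega) ?_
    intro x hx hnx
    simp only [Finset.mem_range] at hx hnx
    rw [Nat.choose_eq_zero_of_lt (by omega), Nat.cast_zero, zero_mul]
  -- the interpolating polynomial
  set P : Polynomial ℝ :=
    ∑ i ∈ Finset.range m, Polynomial.C (a i / (i.factorial : ℝ)) * descPochhammer ℝ i with hP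
  have hPeval : ∀ t, t ≤ n → P.eval (t : ℝ) = f t := by
    intro t ht
    rw [hval t ht, hP, Polynomial.eval_finset_sum]
    have hterm : ∀ i ∈ Finset.range m,
        (Polynomial.C (a i / (i.factorial : ℝ)) * descPochhammer ℝ i).eval (t : ℝ)
          = (t.choose i : ℝ) * a i := by
      intro i _
      rw [Polynomial.eval_mul, Polynomial.eval_C, descPochhammer_eval_eq_descFactorial,
        Nat.descFactorial_eq_factorial_mul_choose]
      have hfac : (i.factorial : ℝ) ≠ 0 := Nat.cast_ne_zero.mpr i.factorial_ne_zero
      push_cast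
      field_simp
    rw [Finset.sum_congr rfl hterm]
    refine Finset.sum_subset (by intro x hx; simp only [Finset.mem_range] at *; omega) ?_
    intro x hx hnx
    simp only [Finset.mem_range] at hx hnx
    rw [ha x (by omega) (by omega), mul_zero]
  -- the root set
  set S : Finset ℕ := Finset.range k ∪ Finset.Icc (n - l + 1) n with hS
  have hScard : S.card = m := by
    rw [hS, Finset.card_union_of_disjoint]
    · rw [Finset.card_range, Nat.card_Icc]
      omega
    · rw [Finset.disjoint_left]
      intro x hx hx'
      simp only [Finset.mem_range] at hx
      simp only [Finset.mem_Icc] at hx'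
      omega
  have hSzero : ∀ t ∈ S, f t = 0 := by
    intro t ht
    rw [hS, Finset.mem_union] at ht
    rcases ht with ht | ht
    · exact hside t (Or.inl (Finset.mem_range.mp ht))
    · exact hside t (Or.inr (by simp only [Finset.mem_Icc] at ht; omega))
  have hSle : ∀ t ∈ S, t ≤ n := by
    intro t ht
    rw [hS, Finset.mem_union] at ht
    rcases ht with ht | ht
    · simp only [Finset.mem_range] at ht; omega
    · simp only [Finset.mem_Icc] at ht; omega
  -- P has degree < m and m roots, hence P = 0
  have hPzero : P = 0 := by
    refine Polynomial.eq_zero_of_natDegree_lt_card_of_eval_eq_zero' P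
      (S.image (Nat.cast : ℕ → ℝ)) ?_ ?_
    · intro x hx
      simp only [Finset.mem_image] at hx
      obtain ⟨t, htS, rfl⟩ := hx
      rw [hPeval t (hSle t htS)]
      exact hSzero t htS
    · have hcard : (S.image (Nat.cast : ℕ → ℝ)).card = m := by
        rw [Finset.card_image_of_injective _ Nat.cast_injective, hScard]
      rw [hcard]
      have : P.natDegree ≤ m - 1 := by
        rw [hP]
        refine Polynomial.natDegree_sum_le_of_forall_le _ _ fun i hi => ?_
        refine (Polynomial.natDegree_C_mul_le _ _).trans ?_
        rw [descPochhammer_natDegree]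
        simp only [Finset.mem_range] at hi
        omega
      omega
  intro t ht
  rw [← hPeval t ht, hPzero, Polynomial.eval_zero]

theorem banded_toeplitz_system_invertible (n m k l : ℕ) (hm : m = k + l) (hn : m ≤ n)
    (p : ℕ → ℝ) (d : ℕ → ℝ)
    (g : Matrix (Fin (n - m + 1)) (Fin (n - m + 1)) ℝ)
    (hg : ∀ i j, g i j = (-1 : ℝ) ^ (l + (i : ℕ) + (j : ℕ)) *
        (if (i : ℕ) ≤ (j : ℕ) + k then (m.choose ((j : ℕ) + k - (i : ℕ)) : ℝ) else 0)) :
    (∀ q : ℕ → ℝ, ∀ i : Fin (n - m + 1),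
      (∑ j : Fin (n - m + 1), g i j * q ((j : ℕ) + k)) =
        ∑ h ∈ Finset.Icc (k - (i : ℕ)) (min m (n - l - (i : ℕ))),
          (-1 : ℝ) ^ (m - h) * (m.choose h : ℝ) * q ((i : ℕ) + h)) ∧
    (∃! q : Fin (n - m + 1) → ℝ, ∀ i : Fin (n - m + 1),
      (∑ j : Fin (n - m + 1), g i j * q j) =
        d i - ((∑ h ∈ Finset.range (k - (i : ℕ)),
            (-1 : ℝ) ^ (m - h) * (m.choose h : ℝ) * p ((i : ℕ) + h)) +
          ∑ h ∈ Finset.Icc (n - l - (i : ℕ) + 1) m,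
            (-1 : ℝ) ^ (m - h) * (m.choose h : ℝ) * p ((i : ℕ) + h))) ∧
    IsUnit g := by
  classical
  -- Part 1: the sum rewriting
  have part1 : ∀ q : ℕ → ℝ, ∀ i : Fin (n - m + 1),
      (∑ j : Fin (n - m + 1), g i j * q ((j : ℕ) + k)) =
        ∑ h ∈ Finset.Icc (k - (i : ℕ)) (min m (n - l - (i : ℕ))),
          (-1 : ℝ) ^ (m - h) * (m.choose h : ℝ) * q ((i : ℕ) + h) := by
    intro q i
    have hi : (i : ℕ) ≤ n - m := by omega
    calc ∑ j : Fin (n - m + 1), g i j * q ((j : ℕ) + k)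
        = ∑ j : Fin (n - m + 1),
            ((-1 : ℝ) ^ (l + (i : ℕ) + (j : ℕ)) *
              (if (i : ℕ) ≤ (j : ℕ) + k then (m.choose ((j : ℕ) + k - (i : ℕ)) : ℝ) else 0))
              * q ((j : ℕ) + k) := by
          refine Finset.sum_congr rfl fun j _ => ?_
          rw [hg i j]
      _ = ∑ j ∈ Finset.range (n - m + 1),
            ((-1 : ℝ) ^ (l + (i : ℕ) + j) *
              (if (i : ℕ) ≤ j + k then (m.choose (j + k - (i : ℕ)) : ℝ) else 0)) * q (j + k) :=
          Fin.sum_univ_eq_sum_range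
            (fun j => ((-1 : ℝ) ^ (l + (i : ℕ) + j) *
              (if (i : ℕ) ≤ j + k then (m.choose (j + k - (i : ℕ)) : ℝ) else 0)) * q (j + k)) _
      _ = _ := sum_rewrite n m k l hm hn (i : ℕ) hi q
  -- Injectivity of mulVec, hence IsUnit
  have hker : ∀ q : Fin (n - m + 1) → ℝ, g.mulVec q = 0 → q = 0 := by
    intro q hq
    set Q : ℕ → ℝ := fun j => if hj : j < n - m + 1 then q ⟨j, hj⟩ else 0 with hQ
    set f : ℕ → ℝ := fun t => if k ≤ t ∧ t ≤ n - l then Q (t - k) else 0 with hf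
    have hfq : ∀ j : Fin (n - m + 1), f ((j : ℕ) + k) = q j := by
      intro j
      have hj : (j : ℕ) ≤ n - m := by omega
      have hcond : k ≤ (j : ℕ) + k ∧ (j : ℕ) + k ≤ n - l := by omega
      rw [hf]
      simp only [if_pos hcond]
      rw [hQ]
      have he : (j : ℕ) + k - k = (j : ℕ) := by omega
      rw [he]
      simp only [dif_pos j.isLt, Fin.eta]
    have hside : ∀ t, (t < k ∨ n - l < t) → f t = 0 := by
      intro t ht
      rw [hf]
      refine if_neg ?_
      omega
    have hdker : ∀ i, i ≤ n - m → (fwdDiff 1)^[m] f i = 0 := by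
      intro i hi
      have hifin : i < n - m + 1 := by omega
      have hzero : ∑ j : Fin (n - m + 1), g ⟨i, hifin⟩ j * q j = 0 := by
        have := congrFun hq ⟨i, hifin⟩
        simpa [Matrix.mulVec, dotProduct] using this
      have hq' : ∑ j : Fin (n - m + 1), g ⟨i, hifin⟩ j * f ((j : ℕ) + k) = 0 := by
        rw [Finset.sum_congr rfl fun j _ => by rw [hfq j]]
        exact hzero
      have hicc := part1 f ⟨i, hifin⟩
      rw [hq'] at hicc
      rw [fwdDiff_iter_eq]
      have hsub : Finset.Icc (k - i) (min m (n - l - i)) ⊆ Finset.range (m + 1) := by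
        intro x hx
        simp only [Finset.mem_Icc, le_min_iff] at hx
        simp only [Finset.mem_range]
        omega
      rw [← Finset.sum_subset hsub ?_]
      · rw [Finset.sum_congr rfl fun h _ => by rw [add_comm i h]] at hicc ⊢
        simp only at hicc ⊢
        rw [Finset.sum_congr rfl fun h _ => rfl]
        exact hicc.symm
      · intro x hx hnx
        simp only [Finset.mem_range] at hx
        simp only [Finset.mem_Icc, le_min_iff, not_and_or, not_le] at hnx
        have : f (i + x) = 0 := by
          refine hside _ ?_
          omega
        rw [this, mul_zero]
    have hzero := ker_zero n m k l hm hn f hside hdker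
    funext j
    have hj : (j : ℕ) + k ≤ n := by omega
    rw [← hfq j, hzero _ hj]
    simp
  have hinj : Function.Injective g.mulVec := by
    intro u v huv
    have hsub : g.mulVec (u - v) = 0 := by
      rw [Matrix.mulVec_sub, huv, sub_self]
    have := hker _ hsub
    exact sub_eq_zero.mp this
  have hunit : IsUnit g := Matrix.mulVec_injective_iff_isUnit.mp hinj
  refine ⟨part1, ?_, hunit⟩
  -- Part 2: unique solvability
  set r : Fin (n - m + 1) → ℝ := fun i =>
    d i - ((∑ h ∈ Finset.range (k - (i : ℕ)),
        (-1 : ℝ) ^ (m - h) * (m.choose h : ℝ) * p ((i : ℕ) + h)) +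
      ∑ h ∈ Finset.Icc (n - l - (i : ℕ) + 1) m,
        (-1 : ℝ) ^ (m - h) * (m.choose h : ℝ) * p ((i : ℕ) + h)) with hr
  have hdet : IsUnit g.det := (Matrix.isUnit_iff_isUnit_det g).mp hunit
  refine ⟨g⁻¹.mulVec r, ?_, ?_⟩
  · intro i
    have : g.mulVec (g⁻¹.mulVec r) = r := by
      rw [Matrix.mulVec_mulVec, Matrix.mul_nonsing_inv g hdet, Matrix.one_mulVec]
    have := congrFun this i
    simpa [Matrix.mulVec, dotProduct, hr] using this
  · intro q hqprop
    have hmv : g.mulVec q = r := by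
      funext i
      have := hqprop i
      simpa [Matrix.mulVec, dotProduct, hr] using this
    have : g.mulVec q = g.mulVec (g⁻¹.mulVec r) := by
      rw [hmv, Matrix.mulVec_mulVec, Matrix.mul_nonsing_inv g hdet, Matrix.one_mulVec]
    exact hinj this
end
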